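/- For every fixed y = (y₁, y₂) ∈ ℝ², the complex-valued function x ↦ F(x, y) on ℝ² satisfies (∂²/∂x₁² + ∂²/∂x₂²) F(x, y) = 8·y₁·y₂·F(x, y) for all x ∈ ℝ². In particular, if y₁·y₂ = 0 (i.e., y ∈ E = [0,∞)² ∖ (0,∞)²), then x ↦ F(x, y) is harmonic on ℝ². -/

import Mathlib

open MeasureTheory Real Set

/-- The lozenge product `x ◊ y = −(x₁+x₂)(y₁+y₂) + i(x₁−x₂)(y₁−y₂)`. -/
noncomputable def loz (x y : ℝ × ℝ) : ℂ :=
  -(((x.1 + x.2) * (y.1 + y.2) : ℝ) : ℂ) + Complex.I * (((x.1 - x.2) * (y.1 - y.2) : ℝ) : ℂ)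

/-- `F(x, y) = exp(x ◊ y)`. -/
noncomputable def Floz (x y : ℝ × ℝ) : ℂ := Complex.exp (loz x y)

/-! Since `x ◊ y` is real-linear in `x`, each coordinate slice of `x ↦ F(x, y)` is
`s ↦ exp(c s + d)`, whose second derivative is `c² exp(c s + d)`. The two slopes are
`c₁ = (1,0) ◊ y` and `c₂ = (0,1) ◊ y`, and `c₁² + c₂² = 2(y₁+y₂)² − 2(y₁−y₂)² = 8 y₁ y₂`. -/

section AffineExp

variable (c d : ℂ)

theorem hasDerivAt_cexp_affine (t : ℝ) :
    HasDerivAt (fun s : ℝ => Complex.exp (c * s + d)) (c * Complex.exp (c * t + d)) t := by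
  have h : HasDerivAt (fun s : ℝ => c * (s : ℂ) + d) c t := by
    simpa using ((Complex.ofRealCLM.hasDerivAt (x := t)).const_mul c).add_const d
  simpa only [mul_comm] using h.cexp

theorem deriv_cexp_affine :
    deriv (fun s : ℝ => Complex.exp (c * s + d)) = fun t : ℝ => c * Complex.exp (c * t + d) :=
  funext fun t => (hasDerivAt_cexp_affine c d t).deriv

theorem deriv_deriv_cexp_affine (t : ℝ) :
    deriv (deriv fun s : ℝ => Complex.exp (c * s + d)) t = c ^ 2 * Complex.exp (c * t + d) := by
  rw [deriv_cexp_affine, ((hasDerivAt_cexp_affine c d t).const_mul c).deriv, sq, mul_assoc]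

end AffineExp

theorem loz_eq_add (x y : ℝ × ℝ) : loz x y = loz (1, 0) y * x.1 + x.2 * loz (0, 1) y := by
  simp only [loz]
  push_cast
  ring

theorem Floz_fst_slice (x₂ : ℝ) (y : ℝ × ℝ) :
    (fun s => Floz (s, x₂) y) = fun s : ℝ => Complex.exp (loz (1, 0) y * s + x₂ * loz (0, 1) y) :=
  funext fun s => by rw [Floz, loz_eq_add]

theorem Floz_snd_slice (x₁ : ℝ) (y : ℝ × ℝ) :
    (fun s => Floz (x₁, s) y) = fun s : ℝ => Complex.exp (loz (0, 1) y * s + x₁ * loz (1, 0) y) :=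
  funext fun s => by rw [Floz, loz_eq_add]; ring_nf

theorem loz_sq_add_loz_sq (y : ℝ × ℝ) :
    loz (1, 0) y ^ 2 + loz (0, 1) y ^ 2 = ((8 * y.1 * y.2 : ℝ) : ℂ) := by
  simp only [loz]
  push_cast
  ring_nf
  rw [Complex.I_sq]
  ring

theorem laplacian_Floz (y : ℝ × ℝ) (x : ℝ × ℝ) :
    (deriv (deriv fun s => Floz (s, x.2) y) x.1
        + deriv (deriv fun s => Floz (x.1, s) y) x.2
      = ((8 * y.1 * y.2 : ℝ) : ℂ) * Floz x y)
    ∧ (y.1 * y.2 = 0 →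
        deriv (deriv fun s => Floz (s, x.2) y) x.1
          + deriv (deriv fun s => Floz (x.1, s) y) x.2 = 0) := by
  have laplacian : deriv (deriv fun s => Floz (s, x.2) y) x.1
      + deriv (deriv fun s => Floz (x.1, s) y) x.2 = ((8 * y.1 * y.2 : ℝ) : ℂ) * Floz x y := by
    rw [Floz_fst_slice, Floz_snd_slice, deriv_deriv_cexp_affine, deriv_deriv_cexp_affine,
      ← loz_sq_add_loz_sq, Floz, loz_eq_add x]
    ring_nf
  refine ⟨laplacian, fun hy => ?_⟩
  rw [laplacian, mul_assoc, hy, mul_zero, Complex.ofReal_zero, zero_mul]
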